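/- Let p = 2, so F is the field with two elements, and let f : F^n → F be in layered canalizing form with canalizing depth d, where the core function P_C has no canalizing variables. If x_s is a variable in the support of P_C, then the number of transitions changed by deleting x_s satisfies #{x ∈ F^n : f(x_1, …, x_{s−1}, 0, x_{s+1}, …, x_n) ≠ f(x)} ≤ 2^{n − d − 1}. -/

import Mathlib

open Finset

/-- Indicator function of the complement of `S`: `Qt S x = 1` if `x ∉ S`, `0` if `x ∈ S`. -/
def Qt {F : Type*} [Fintype F] [DecidableEq F] [Zero F] [One F] (S : Finset F) (x : F) : F :=
  if x ∈ S then 0 else 1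

/-- `g` actually depends on (is essential in) its `i`-th variable. -/
def DependsOnCoord {F : Type*} (n : ℕ) (g : (Fin n → F) → F) (i : Fin n) : Prop :=
  ∃ x y : Fin n → F, (∀ j, j ≠ i → x j = y j) ∧ g x ≠ g y

/-- `g` is canalizing in its `i`-th variable with canalizing input set `S`
(a nonempty proper subset of `F`) and canalizing output `b`. -/
def Canalizing {F : Type*} [Fintype F] [DecidableEq F] (n : ℕ) (g : (Fin n → F) → F)
    (i : Fin n) (S : Finset F) (b : F) : Prop :=
  S.Nonempty ∧ S ≠ Finset.univ ∧ ∀ x : Fin n → F, x i ∈ S → g x = b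

/-- `f` is 1-canalizing in its `i`-th variable with canalizing input set `S`
(a nonempty proper subset of `F`) and canalizing output `b`: `f = b` whenever `x i ∈ S`,
and on `x i ∉ S` the value of `f` is given by a single function of the remaining variables
which is not identically `b`. -/
def OneCanalizing {F : Type*} [Fintype F] [DecidableEq F] (n : ℕ) (f : (Fin n → F) → F)
    (i : Fin n) (S : Finset F) (b : F) : Prop :=
  S.Nonempty ∧ S ≠ Finset.univ ∧
  (∀ x : Fin n → F, x i ∈ S → f x = b) ∧
  (∀ x y : Fin n → F, x i ∉ S → y i ∉ S → (∀ j, j ≠ i → x j = y j) → f x = f y) ∧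
  (∃ x : Fin n → F, x i ∉ S ∧ f x ≠ b)

/-- Nested evaluation `M₁(M₂(⋯(M_r · P + B_r)⋯) + B₂) + B₁`. -/
def nestEval {F : Type*} [Mul F] [Add F] : List (F × F) → F → F
  | [], P => P
  | (m, b) :: t, P => m * nestEval t P + b

/-- Layered canalizing form data for a function of `n` variables with `r ≥ 1` layers:
pairwise disjoint layer blocks, nonempty proper canalizing input sets for the
layer variables, layer constants `B` with the last one nonzero, and a core function
`P_C` of the remaining variables having no 1-canalizing variables. -/
structure LayeredForm (F : Type*) [Field F] [Fintype F] [DecidableEq F] (n r : ℕ) where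
  hr : 0 < r
  layer : Fin r → Finset (Fin n)
  disj : ∀ i j : Fin r, i ≠ j → Disjoint (layer i) (layer j)
  S : Fin n → Finset F
  Sne : ∀ i : Fin r, ∀ v ∈ layer i, (S v).Nonempty
  Spr : ∀ i : Fin r, ∀ v ∈ layer i, S v ≠ Finset.univ
  B : Fin r → F
  Blast : B ⟨r - 1, Nat.sub_lt hr Nat.one_pos⟩ ≠ 0
  PC : (Fin n → F) → F
  PCvars : ∀ i : Fin r, ∀ v ∈ layer i, ¬ DependsOnCoord n PC v
  PCnc : ¬ ∃ (v : Fin n) (S' : Finset F) (b : F), OneCanalizing n PC v S' b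

/-- The product `M_i = ∏_{v ∈ L_i} Q̃_{S_v}(x_v)` over the `i`-th layer. -/
def LayeredForm.M {F : Type*} [Field F] [Fintype F] [DecidableEq F] {n r : ℕ}
    (L : LayeredForm F n r) (i : Fin r) (x : Fin n → F) : F :=
  ∏ v ∈ L.layer i, Qt (L.S v) (x v)

/-- The function determined by a layered canalizing form:
`f(x) = M₁(M₂(⋯(M_r · P_C + B_r)⋯) + B₂) + B₁`. -/
def LayeredForm.eval {F : Type*} [Field F] [Fintype F] [DecidableEq F] {n r : ℕ}
    (L : LayeredForm F n r) (x : Fin n → F) : F :=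
  nestEval (List.ofFn fun i => (L.M i x, L.B i)) (L.PC x)

/-- The number of state-space transitions changed when the input `s` of `f`
is replaced by the constant `a` (edge deletion when `a = 0`). -/
def chCount {F : Type*} [Fintype F] [DecidableEq F] {n : ℕ}
    (f : (Fin n → F) → F) (s : Fin n) (a : F) : ℕ :=
  (Finset.univ.filter fun x : Fin n → F => f (Function.update x s a) ≠ f x).card

/-!
A changed transition `x` must make the core value differ, so `x s ≠ 0`, and every layer factor
`M_i(x)` must be nonzero (a zero factor makes `f` constant in the core), so each layer variable
avoids its canalizing set. Over the two-element field both conditions pin the coordinate down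
uniquely, so the changed transitions are determined by the `n - d - 1` remaining coordinates.
-/

open Function

theorem ne_of_apply_update_ne {ι α β : Type*} [DecidableEq ι] {g : (ι → α) → β} {x : ι → α}
    {s : ι} {a : α} (h : g (update x s a) ≠ g x) : x s ≠ a :=
  fun hxs => h (by rw [← hxs, update_eq_self])

theorem fst_ne_zero_of_nestEval_ne {F : Type*} [MulZeroClass F] [Add F] :
    ∀ {l : List (F × F)} {P P' : F}, nestEval l P ≠ nestEval l P' → ∀ q ∈ l, q.1 ≠ 0
  | [], _, _, _ => by simp
  | (m, b) :: t, P, P', h => by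
    refine List.forall_mem_cons.2
      ⟨?_, fst_ne_zero_of_nestEval_ne (P := P) (P' := P') fun he => h ?_⟩
    · rintro rfl
      simp [nestEval] at h
    · simp only [nestEval, he]

theorem eq_of_notMem_of_card_eq_two {α : Type*} [Fintype α] (hα : Fintype.card α = 2)
    {S : Finset α} (hS : S.Nonempty) {a b : α} (ha : a ∉ S) (hb : b ∉ S) : a = b := by
  classical
  have hcompl : Sᶜ.card ≤ 1 := by
    rw [card_compl, hα]
    have := hS.card_pos
    omega
  exact card_le_one.mp hcompl a (mem_compl.2 ha) b (mem_compl.2 hb)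

theorem card_le_pow_of_eqOn {ι F : Type*} [Fintype ι] [Fintype F]
    (A : Finset (ι → F)) (E : Finset ι) (hA : ∀ x ∈ A, ∀ y ∈ A, Set.EqOn x y E) :
    A.card ≤ Fintype.card F ^ (Fintype.card ι - E.card) := by
  classical
  calc A.card ≤ (univ : Finset ((Eᶜ : Finset ι) → F)).card :=
        card_le_card_of_injOn (fun x v => x v) (fun _ _ => mem_coe.2 (mem_univ _))
          fun x hx y hy hxy => funext fun v =>
            if hv : v ∈ E then hA x hx y hy hv else congrFun hxy ⟨v, mem_compl.2 hv⟩
    _ = _ := by rw [card_univ, Fintype.card_fun, Fintype.card_coe, card_compl]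

namespace LayeredForm

variable {F : Type*} [Field F] [Fintype F] [DecidableEq F] {n r : ℕ} (L : LayeredForm F n r)

def layerVars : Finset (Fin n) :=
  univ.biUnion L.layer

theorem card_layerVars : L.layerVars.card = ∑ i, (L.layer i).card :=
  card_biUnion fun i _ j _ hij => L.disj i j hij

theorem notMem_layerVars_of_dependsOnCoord {s : Fin n} (hs : DependsOnCoord n L.PC s) :
    s ∉ L.layerVars := by
  simp only [layerVars, mem_biUnion, mem_univ, true_and, not_exists]
  exact fun i hi => L.PCvars i s hi hs

theorem M_update_of_notMem {i : Fin r} {s : Fin n} (hs : s ∉ L.layer i) (x : Fin n → F)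
    (a : F) : L.M i (update x s a) = L.M i x :=
  prod_congr rfl fun v hv => by rw [update_of_ne (ne_of_mem_of_not_mem hv hs)]

theorem notMem_S_of_eval_update_ne {s : Fin n} (hs : s ∉ L.layerVars) {x : Fin n → F} {a : F}
    (h : L.eval (update x s a) ≠ L.eval x) {v : Fin n} (hv : v ∈ L.layerVars) :
    x v ∉ L.S v := by
  obtain ⟨i, -, hvi⟩ := mem_biUnion.1 hv
  simp only [eval, M_update_of_notMem L (fun hsj => hs (mem_biUnion.2 ⟨_, mem_univ _, hsj⟩))]
    at h
  have hMi : L.M i x ≠ 0 := fst_ne_zero_of_nestEval_ne h _ (List.mem_ofFn.2 ⟨i, rfl⟩)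
  intro hxv
  exact prod_ne_zero_iff.1 hMi v hvi (by simp [Qt, hxv])

theorem eqOn_of_eval_update_ne (hF : Fintype.card F = 2) {s : Fin n} (hs : s ∉ L.layerVars)
    {x y : Fin n → F} (hx : L.eval (update x s 0) ≠ L.eval x)
    (hy : L.eval (update y s 0) ≠ L.eval y) : Set.EqOn x y ↑(insert s L.layerVars) := by
  intro v hv
  rcases mem_insert.1 (mem_coe.1 hv) with rfl | hv
  · exact eq_of_notMem_of_card_eq_two hF (singleton_nonempty 0)
      (notMem_singleton.2 (ne_of_apply_update_ne hx))
      (notMem_singleton.2 (ne_of_apply_update_ne hy))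
  · obtain ⟨i, -, hvi⟩ := mem_biUnion.1 hv
    exact eq_of_notMem_of_card_eq_two hF (L.Sne i v hvi)
      (L.notMem_S_of_eval_update_ne hs hx hv) (L.notMem_S_of_eval_update_ne hs hy hv)

end LayeredForm

theorem stmt10_general {F : Type*} [Field F] [Fintype F] [DecidableEq F] (hp : Fintype.card F = 2)
    {n r : ℕ} (f : (Fin n → F) → F) (L : LayeredForm F n r) (hf : f = L.eval)
    (s : Fin n) (hsupp : DependsOnCoord n L.PC s) :
    chCount f s 0 ≤ 2 ^ (n - (∑ i : Fin r, (L.layer i).card) - 1) := by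
  subst hf
  have hs := L.notMem_layerVars_of_dependsOnCoord hsupp
  have hbound := card_le_pow_of_eqOn (univ.filter fun x => L.eval (update x s 0) ≠ L.eval x)
    (insert s L.layerVars) fun x hx y hy =>
    L.eqOn_of_eval_update_ne hp hs (mem_filter.1 hx).2 (mem_filter.1 hy).2
  rwa [hp, Fintype.card_fin, card_insert_of_notMem hs, L.card_layerVars, ← Nat.sub_sub] at hbound

/-- In the Boolean case `p = 2`, the edge-deletion bound for a variable in
the support of a core function with no canalizing variables reduces to `2 ^ (n - d - 1)`. -/
theorem stmt10 {F : Type*} [Field F] [Fintype F] [DecidableEq F] (hp : Fintype.card F = 2)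
    {n r : ℕ} (f : (Fin n → F) → F) (L : LayeredForm F n r) (hf : f = L.eval)
    (hnc : ∀ v : Fin n, DependsOnCoord n L.PC v →
      ¬ ∃ (S' : Finset F) (b : F), Canalizing n L.PC v S' b)
    (s : Fin n) (hsupp : DependsOnCoord n L.PC s) :
    chCount f s 0 ≤ 2 ^ (n - (∑ i : Fin r, (L.layer i).card) - 1) :=
  stmt10_general hp f L hf s hsupp
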